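/- Set x_n := T_1 T_2 ⋯ T_{n−1} in HC_n. For every subset I ⊆ {1,…,n} with |I| even, there exists ε ∈ {1, −1} such that x_n C_I − ε x_n lies in [HC_n, HC_n]. -/

import Mathlib

noncomputable section

/-- The ring `ℤ[1/2]`. -/
abbrev Zh : Type := Localization.Away (2 : ℤ)

/-- The ring `A = ℤ[1/2][v, v⁻¹]` of Laurent polynomials over `ℤ[1/2]`. -/
def Av : Type := LaurentPolynomial Zh

noncomputable instance : CommRing Av := inferInstanceAs (CommRing (LaurentPolynomial Zh))

/-- The indeterminate `v ∈ A`. -/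
def vA : Av := (LaurentPolynomial.T 1 : LaurentPolynomial Zh)

/-- Generators of the Hecke–Clifford algebra: `T i` (0-based, for `T_{i+1}` of the paper,
`i = 0, …, n-2`) and `c j` (0-based, for `c_{j+1}`, `j = 0, …, n-1`). -/
inductive HCgen (n : ℕ) : Type
  | T : Fin (n - 1) → HCgen n
  | c : Fin n → HCgen n

/-- For a `T`-index `i`, the `c`-index of the first strand that `T_i` involves. -/
def lo {n : ℕ} (i : Fin (n - 1)) : Fin n := ⟨i.1, by have := i.2; omega⟩

/-- For a `T`-index `i`, the `c`-index of the second strand that `T_i` involves. -/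
def hi {n : ℕ} (i : Fin (n - 1)) : Fin n := ⟨i.1 + 1, by have := i.2; omega⟩

/-- The defining relations of the Hecke–Clifford algebra. -/
inductive HCrel (n : ℕ) : FreeAlgebra Av (HCgen n) → FreeAlgebra Av (HCgen n) → Prop
  | quad (i : Fin (n - 1)) :
      HCrel n ((FreeAlgebra.ι Av (HCgen.T i) - algebraMap Av (FreeAlgebra Av (HCgen n)) vA) *
        (FreeAlgebra.ι Av (HCgen.T i) + 1)) 0
  | Tcomm (i j : Fin (n - 1)) (h : i.1 + 1 < j.1) :
      HCrel n (FreeAlgebra.ι Av (HCgen.T i) * FreeAlgebra.ι Av (HCgen.T j))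
        (FreeAlgebra.ι Av (HCgen.T j) * FreeAlgebra.ι Av (HCgen.T i))
  | braid (i j : Fin (n - 1)) (h : i.1 + 1 = j.1) :
      HCrel n (FreeAlgebra.ι Av (HCgen.T i) * FreeAlgebra.ι Av (HCgen.T j) *
          FreeAlgebra.ι Av (HCgen.T i))
        (FreeAlgebra.ι Av (HCgen.T j) * FreeAlgebra.ι Av (HCgen.T i) *
          FreeAlgebra.ι Av (HCgen.T j))
  | csq (i : Fin n) :
      HCrel n (FreeAlgebra.ι Av (HCgen.c i) * FreeAlgebra.ι Av (HCgen.c i)) 1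
  | canti (i j : Fin n) (h : i ≠ j) :
      HCrel n (FreeAlgebra.ι Av (HCgen.c i) * FreeAlgebra.ι Av (HCgen.c j))
        (-(FreeAlgebra.ι Av (HCgen.c j) * FreeAlgebra.ι Av (HCgen.c i)))
  | Tccomm (i : Fin (n - 1)) (j : Fin n) (h1 : j ≠ lo i) (h2 : j ≠ hi i) :
      HCrel n (FreeAlgebra.ι Av (HCgen.T i) * FreeAlgebra.ι Av (HCgen.c j))
        (FreeAlgebra.ι Av (HCgen.c j) * FreeAlgebra.ι Av (HCgen.T i))
  | Tc (i : Fin (n - 1)) :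
      HCrel n (FreeAlgebra.ι Av (HCgen.T i) * FreeAlgebra.ι Av (HCgen.c (lo i)))
        (FreeAlgebra.ι Av (HCgen.c (hi i)) * FreeAlgebra.ι Av (HCgen.T i))

/-- The Hecke–Clifford algebra `HC_n` over `A`. -/
abbrev HC (n : ℕ) : Type := RingQuot (HCrel n)

/-- The generator `T_i` of `HC_n` (`0`-based index). -/
def Tg {n : ℕ} (i : Fin (n - 1)) : HC n :=
  RingQuot.mkAlgHom Av (HCrel n) (FreeAlgebra.ι Av (HCgen.T i))

/-- The generator `c_j` of `HC_n` (`0`-based index). -/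
def cg {n : ℕ} (j : Fin n) : HC n :=
  RingQuot.mkAlgHom Av (HCrel n) (FreeAlgebra.ι Av (HCgen.c j))

/-- `T_{i_1} ⋯ T_{i_k}` for a word `L = [i_1, …, i_k]`. -/
def Tw {n : ℕ} (L : List (Fin (n - 1))) : HC n := (L.map Tg).prod

/-- `C_I = c_{i_1} ⋯ c_{i_k}` for a subset `I = {i_1 < ⋯ < i_k}`. -/
def Cset {n : ℕ} (I : Finset (Fin n)) : HC n := ((I.sort (· ≤ ·)).map cg).prod

/-- The `A`-submodule `[HC_n, HC_n]` spanned by all commutators. -/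
def commSpan (n : ℕ) : Submodule Av (HC n) :=
  Submodule.span Av {x : HC n | ∃ a b : HC n, x = a * b - b * a}

/-- The simple transposition `s_i = (i+1, i+2)` (paper numbering) in `S_n`. -/
def sgen {n : ℕ} (i : Fin (n - 1)) : Equiv.Perm (Fin n) := Equiv.swap (lo i) (hi i)

/-- The product of the simple transpositions along a word. -/
def wordProd {n : ℕ} (L : List (Fin (n - 1))) : Equiv.Perm (Fin n) := (L.map sgen).prod

/-- The Coxeter length of a permutation: the minimal length of a word in the simple
transpositions expressing it. -/
def plen {n : ℕ} (σ : Equiv.Perm (Fin n)) : ℕ :=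
  sInf {k | ∃ L : List (Fin (n - 1)), wordProd L = σ ∧ L.length = k}

/-- `L` is a reduced expression of `σ`. -/
def IsReducedWord {n : ℕ} (σ : Equiv.Perm (Fin n)) (L : List (Fin (n - 1))) : Prop :=
  wordProd L = σ ∧ L.length = plen σ

/-- The canonical reduced word of the permutation `w_γ` attached to a composition `γ` of `n`:
the increasing list of all `0`-based `T`-indices `i ∈ {0, …, n-2}` such that `i+1` is not a
partial sum of `γ`. -/
def compWord {n : ℕ} (γ : Composition n) : List (Fin (n - 1)) :=
  (List.finRange (n - 1)).filter (fun i => i.1 + 1 ∉ γ.blocks.scanl (· + ·) 0)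

/-- The element `T_{w_γ}` of `HC_n` for a composition `γ` of `n`. -/
def Twγ {n : ℕ} (γ : Composition n) : HC n := Tw (compWord γ)

/-- The permutation `w_γ` attached to a composition `γ` of `n`. -/
def wγ {n : ℕ} (γ : Composition n) : Equiv.Perm (Fin n) := wordProd (compWord γ)

/-- A composition is a partition if its parts are weakly decreasing. -/
def IsPartitionC {n : ℕ} (γ : Composition n) : Prop := γ.blocks.Pairwise (· ≥ ·)

/-- An odd partition: a partition all of whose parts are odd. -/
def IsOddPartitionC {n : ℕ} (γ : Composition n) : Prop :=
  IsPartitionC γ ∧ ∀ p ∈ γ.blocks, Odd p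

instance {n : ℕ} (γ : Composition n) : Decidable (IsOddPartitionC γ) := by
  unfold IsOddPartitionC IsPartitionC
  infer_instance

/-- A trace function on `HC_n`: an `A`-linear map that is symmetric on products and vanishes
on the odd part, i.e. on all elements `T_σ C_I` with `|I|` odd (with `T_σ` given by any
reduced expression of `σ`). -/
def IsTraceFun {n : ℕ} (φ : HC n →ₗ[Av] Av) : Prop :=
  (∀ a b : HC n, φ (a * b) = φ (b * a)) ∧
  ∀ L : List (Fin (n - 1)), IsReducedWord (wordProd L) L →
    ∀ I : Finset (Fin n), Odd I.card → φ (Tw L * Cset I) = 0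

/-- The element `(v - 1)/2 ∈ A`. -/
def halfvm1 : Av := Ring.inverse (2 : Av) * (vA - 1)

/-!
Since `x_n = T_1 ⋯ T_{n-1}` satisfies `x_n c_j = c_{j+1} x_n` for `j + 1 < n`, writing
`m = min I` (so `m + 1 < n` as `|I| ≥ 2`) gives `x_n C_I = c_{m+1} x_n C_{I ∖ m}`, which is
`≡ x_n C_{I ∖ m} c_{m+1}` modulo commutators; the right-hand side is `± x_n C_J` with
`J = (I ∖ m) ∆ {m+1}`, again of even size. The weight `∑_{i ∈ I} (n - i)` strictly drops from
`I` to `J`, so iterating ends at `J = ∅`.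
-/

section HeckeClifford

variable {n : ℕ}

theorem cg_mul_self (j : Fin n) : cg j * cg j = 1 := by
  simpa [cg] using RingQuot.mkAlgHom_rel Av (HCrel.csq j)

/- Signs are written as scalars `(-1 : Av) • _`, since the `Neg` lemmas (`neg_mul`, …) do not
rewrite in the quotient `HC n`. -/
theorem cg_mul_cg_of_ne {i j : Fin n} (h : i ≠ j) : cg i * cg j = (-1 : Av) • (cg j * cg i) :=
  have hneg : cg i * cg j = -(cg j * cg i) := by
    simpa [cg] using RingQuot.mkAlgHom_rel Av (HCrel.canti i j h)
  hneg.trans (neg_one_smul Av _).symm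

theorem Tg_mul_cg_of_ne {i : Fin (n - 1)} {j : Fin n} (hlo : j ≠ lo i) (hhi : j ≠ hi i) :
    Tg i * cg j = cg j * Tg i := by
  simpa [Tg, cg] using RingQuot.mkAlgHom_rel Av (HCrel.Tccomm i j hlo hhi)

theorem Tg_mul_cg_lo (i : Fin (n - 1)) : Tg i * cg (lo i) = cg (hi i) * Tg i := by
  simpa [Tg, cg] using RingQuot.mkAlgHom_rel Av (HCrel.Tc i)

theorem Tw_append (L₁ L₂ : List (Fin (n - 1))) : Tw (L₁ ++ L₂) = Tw L₁ * Tw L₂ := by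
  simp [Tw]

theorem Tw_cons (i : Fin (n - 1)) (L : List (Fin (n - 1))) : Tw (i :: L) = Tg i * Tw L := by
  simp [Tw]

theorem Tw_commute_cg {L : List (Fin (n - 1))} {j : Fin n}
    (h : ∀ i ∈ L, j ≠ lo i ∧ j ≠ hi i) : Commute (Tw L) (cg j) := by
  refine Commute.list_prod_left _ _ fun x hx => ?_
  obtain ⟨i, hi, rfl⟩ := List.mem_map.1 hx
  exact Tg_mul_cg_of_ne (h i hi).1 (h i hi).2

theorem Tw_mul_cg_lo_of_pairwise {L : List (Fin (n - 1))} (hL : L.Pairwise (· < ·))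
    {i : Fin (n - 1)} (hmem : i ∈ L) : Tw L * cg (lo i) = cg (hi i) * Tw L := by
  obtain ⟨s, t, rfl⟩ := List.append_of_mem hmem
  simp only [List.pairwise_append, List.pairwise_cons, List.mem_cons] at hL
  have hs : Commute (Tw s) (cg (hi i)) := Tw_commute_cg fun k hk => by
    have := hL.2.2 k hk i (Or.inl rfl)
    simp only [ne_eq, lo, hi, Fin.ext_iff, Fin.lt_def] at this ⊢
    omega
  have ht : Commute (Tw t) (cg (lo i)) := Tw_commute_cg fun k hk => by
    have := hL.2.1.1 k hk
    simp only [ne_eq, lo, hi, Fin.ext_iff, Fin.lt_def] at this ⊢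
    omega
  rw [Tw_append, Tw_cons, mul_assoc, mul_assoc, ht.eq, ← mul_assoc (Tg i), Tg_mul_cg_lo,
    mul_assoc, ← mul_assoc, hs.eq, mul_assoc]

def coxeterElement (n : ℕ) : HC n := Tw (List.finRange (n - 1))

theorem coxeterElement_mul_cg_lo (i : Fin (n - 1)) :
    coxeterElement n * cg (lo i) = cg (hi i) * coxeterElement n :=
  Tw_mul_cg_lo_of_pairwise (List.pairwise_lt_finRange _) (List.mem_finRange i)

theorem Cset_empty : Cset (∅ : Finset (Fin n)) = 1 := by
  simp [Cset]

theorem Cset_insert_of_forall_lt {I : Finset (Fin n)} {a : Fin n} (h : ∀ b ∈ I, a < b) :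
    Cset (insert a I) = cg a * Cset I := by
  have ha : a ∉ I := fun ha => lt_irrefl a (h a ha)
  simp only [Cset, Finset.sort_insert (· ≤ ·) (fun b hb => (h b hb).le) ha, List.map_cons,
    List.prod_cons]

theorem list_prod_map_cg_mul_cg {l : List (Fin n)} {a : Fin n} (ha : a ∉ l) :
    (l.map cg).prod * cg a = (-1 : Av) ^ l.length • (cg a * (l.map cg).prod) := by
  induction l with
  | nil => simp
  | cons b l ih =>
    rw [List.mem_cons, not_or] at ha
    rw [List.map_cons, List.prod_cons, mul_assoc, ih ha.2, mul_smul_comm, ← mul_assoc,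
      cg_mul_cg_of_ne (Ne.symm ha.1), smul_mul_assoc, smul_smul, List.length_cons, pow_succ,
      mul_assoc]

theorem Cset_mul_cg_of_notMem {I : Finset (Fin n)} {a : Fin n} (ha : a ∉ I) :
    Cset I * cg a = (-1 : Av) ^ I.card • (cg a * Cset I) := by
  unfold Cset
  rw [list_prod_map_cg_mul_cg (by simpa using ha), Finset.length_sort]

theorem Cset_insert_mul_cg {I : Finset (Fin n)} {a : Fin n} (h : ∀ b ∈ I, a < b) :
    Cset (insert a I) * cg a = (-1 : Av) ^ I.card • Cset I := by
  rw [Cset_insert_of_forall_lt h, mul_assoc,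
    Cset_mul_cg_of_notMem fun ha => lt_irrefl a (h a ha), mul_smul_comm, ← mul_assoc,
    cg_mul_self, one_mul]

theorem Cset_mul_cg_of_forall_lt {I : Finset (Fin n)} {a : Fin n} (h : ∀ b ∈ I, a < b) :
    Cset I * cg a = (-1 : Av) ^ I.card • Cset (insert a I) := by
  rw [Cset_mul_cg_of_notMem fun ha => lt_irrefl a (h a ha), Cset_insert_of_forall_lt h]

theorem hi_lt_of_lo_lt {i : Fin (n - 1)} {b : Fin n} (h : lo i < b) (hb : b ≠ hi i) :
    hi i < b := by
  simp only [lo, hi, Fin.lt_def, ne_eq, Fin.ext_iff] at h hb ⊢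
  omega

theorem mul_sub_mul_mem_commSpan (a b : HC n) : a * b - b * a ∈ commSpan n :=
  Submodule.subset_span ⟨a, b, rfl⟩

theorem coxeterElement_mul_Cset_insert_sub_mem (i : Fin (n - 1)) {I : Finset (Fin n)}
    (h : ∀ b ∈ I, lo i < b) :
    coxeterElement n * Cset (insert (lo i) I) - coxeterElement n * Cset I * cg (hi i) ∈
      commSpan n := by
  rw [Cset_insert_of_forall_lt h, ← mul_assoc, coxeterElement_mul_cg_lo, mul_assoc]
  exact mul_sub_mul_mem_commSpan _ _

def cliffordWeight (I : Finset (Fin n)) : ℕ := ∑ i ∈ I, (n - i.1)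

theorem cliffordWeight_insert {I : Finset (Fin n)} {a : Fin n} (ha : a ∉ I) :
    cliffordWeight (insert a I) = (n - a.1) + cliffordWeight I :=
  Finset.sum_insert ha

theorem cliffordWeight_add_erase {I : Finset (Fin n)} {a : Fin n} (ha : a ∈ I) :
    (n - a.1) + cliffordWeight (I.erase a) = cliffordWeight I :=
  Finset.add_sum_erase I (fun i => n - i.1) ha

theorem exists_coxeterElement_mul_Cset_sub_smul_mem_of_nonempty {I : Finset (Fin n)}
    (hI : Even I.card) (hne : I.Nonempty) :
    ∃ J : Finset (Fin n), ∃ k : ℕ, Even J.card ∧ cliffordWeight J < cliffordWeight I ∧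
      coxeterElement n * Cset I - (-1 : Av) ^ k • (coxeterElement n * Cset J) ∈ commSpan n := by
  induction I using Finset.induction_on_min with
  | empty => simp at hne
  | insert m I hm _ =>
  have hmI : m ∉ I := fun h => lt_irrefl m (hm m h)
  rw [Finset.card_insert_of_notMem hmI, Nat.even_add_one] at hI
  obtain ⟨b, hb⟩ : I.Nonempty := Finset.nonempty_iff_ne_empty.2 (by rintro rfl; simp at hI)
  obtain ⟨i, rfl⟩ : ∃ i : Fin (n - 1), lo i = m :=
    ⟨⟨m.1, by have := Fin.lt_def.1 (hm b hb); have := b.2; omega⟩, rfl⟩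
  have hrot := coxeterElement_mul_Cset_insert_sub_mem i hm
  have hval : (lo i).1 = i.1 ∧ (hi i).1 = i.1 + 1 ∧ i.1 < n - 1 := ⟨rfl, rfl, i.2⟩
  by_cases ha : hi i ∈ I
  · have hI' : ∀ b ∈ I.erase (hi i), hi i < b := fun b hb =>
      hi_lt_of_lo_lt (hm b (Finset.mem_of_mem_erase hb)) (Finset.ne_of_mem_erase hb)
    have hC :
        Cset I * cg (hi i) = (-1 : Av) ^ (I.erase (hi i)).card • Cset (I.erase (hi i)) := by
      rw [← Cset_insert_mul_cg hI', Finset.insert_erase ha]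
    rw [← Finset.card_erase_add_one ha, Nat.even_add_one, not_not] at hI
    refine ⟨I.erase (hi i), (I.erase (hi i)).card, hI, ?_, ?_⟩
    · rw [cliffordWeight_insert hmI, ← cliffordWeight_add_erase ha]
      omega
    · rwa [mul_assoc, hC, mul_smul_comm] at hrot
  · have hI' : ∀ b ∈ I, hi i < b := fun b hb =>
      hi_lt_of_lo_lt (hm b hb) (ne_of_mem_of_not_mem hb ha)
    refine ⟨insert (hi i) I, I.card, ?_, ?_, ?_⟩
    · rwa [Finset.card_insert_of_notMem ha, Nat.even_add_one]
    · rw [cliffordWeight_insert hmI, cliffordWeight_insert ha]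
      omega
    · rwa [mul_assoc, Cset_mul_cg_of_forall_lt hI', mul_smul_comm] at hrot

theorem exists_coxeterElement_mul_Cset_sub_smul_mem {I : Finset (Fin n)} (hI : Even I.card) :
    ∃ k : ℕ, coxeterElement n * Cset I - (-1 : Av) ^ k • coxeterElement n ∈ commSpan n := by
  induction hw : cliffordWeight I using Nat.strong_induction_on generalizing I with
  | _ w ih =>
  rcases I.eq_empty_or_nonempty with rfl | hne
  · exact ⟨0, by simp [Cset_empty]⟩
  obtain ⟨J, k, hJ, hlt, hIJ⟩ := exists_coxeterElement_mul_Cset_sub_smul_mem_of_nonempty hI hne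
  obtain ⟨l, hJl⟩ := ih _ (hw ▸ hlt) hJ rfl
  refine ⟨k + l, ?_⟩
  have hsplit : coxeterElement n * Cset I - (-1 : Av) ^ (k + l) • coxeterElement n =
      (coxeterElement n * Cset I - (-1 : Av) ^ k • (coxeterElement n * Cset J)) +
        (-1 : Av) ^ k • (coxeterElement n * Cset J - (-1 : Av) ^ l • coxeterElement n) := by
    rw [pow_add, mul_smul, smul_sub]
    abel
  rw [hsplit]
  exact add_mem hIJ (Submodule.smul_mem _ _ hJl)

end HeckeClifford

theorem statement_5_general (n : ℕ) (I : Finset (Fin n)) (hI : Even I.card) :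
    ∃ ε : Av, (ε = 1 ∨ ε = -1) ∧
      Tw (List.finRange (n - 1)) * Cset I - ε • Tw (List.finRange (n - 1)) ∈ commSpan n := by
  obtain ⟨k, hk⟩ := exists_coxeterElement_mul_Cset_sub_smul_mem hI
  exact ⟨_, neg_one_pow_eq_or Av k, hk⟩

/-- For `I ⊆ [n]` with `|I|` even, `x_n C_I ≡ ± x_n mod [HC_n, HC_n]`,
where `x_n = T_1 ⋯ T_{n-1}`. -/
theorem statement_5 (n : ℕ) (hn : 1 ≤ n) (I : Finset (Fin n)) (hI : Even I.card) :
    ∃ ε : Av, (ε = 1 ∨ ε = -1) ∧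
      Tw (List.finRange (n - 1)) * Cset I - ε • Tw (List.finRange (n - 1)) ∈ commSpan n :=
  statement_5_general n I hI
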